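/- arXiv:1403.2410 — 4 statements merged into one kernel-verified Lean document; each statement's English description precedes it below -/
import Mathlib

section
/- Let Γ be an even unimodular lattice, let Λ ⊆ Γ be a primitive nondegenerate sublattice with orthogonal complement Λ⊥, and let g ∈ O(Λ) induce the identity map on the discriminant group Λ*/Λ. Then the ℚ-linear map on Γ⊗ℚ = (Λ⊗ℚ) ⊕ (Λ⊥⊗ℚ) defined by (v,w) ↦ (g(v),w) maps Γ bijectively onto Γ; in other words, g extends to an automorphism ĝ ∈ O(Γ) whose restriction to Λ is g and which fixes Λ⊥ pointwise. -/
/-!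
STATEMENT 2: Let Γ be an even unimodular lattice, Λ ⊆ Γ a primitive nondegenerate
sublattice with orthogonal complement Λ⊥, and let g ∈ O(Λ) induce the identity on the
discriminant group Λ*/Λ (equivalently, g x − x ∈ Λ for all x ∈ Λ*).  Then the ℚ-linear
map φ on Γ⊗ℚ = (Λ⊗ℚ) ⊕ (Λ⊥⊗ℚ) given by (v,w) ↦ (g v, w) — i.e. the ℚ-linear map
restricting to g on Λ and fixing Λ⊥⊗ℚ pointwise — maps Γ bijectively onto Γ; in other
words it is an automorphism ĝ ∈ O(Γ) (it preserves the form on Γ) extending g and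
fixing Λ⊥ pointwise.
-/

noncomputable section

variable {V : Type} [AddCommGroup V] [Module ℚ V]

/-- The dual lattice `L* = {x ∈ L⊗ℚ : ⟨x,v⟩ ∈ ℤ for all v ∈ L}`. -/
def dualLat (B : V →ₗ[ℚ] V →ₗ[ℚ] ℚ) (L : Submodule ℤ V) : Submodule ℤ V where
  carrier := {x | x ∈ Submodule.span ℚ (L : Set V) ∧ ∀ v ∈ L, ∃ n : ℤ, B x v = (n : ℚ)}
  zero_mem' := ⟨Submodule.zero_mem _, fun v _ => ⟨0, by simp⟩⟩
  add_mem' := by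
    rintro x y ⟨hx1, hx2⟩ ⟨hy1, hy2⟩
    refine ⟨Submodule.add_mem _ hx1 hy1, fun v hv => ?_⟩
    obtain ⟨m, hm⟩ := hx2 v hv
    obtain ⟨k, hk⟩ := hy2 v hv
    exact ⟨m + k, by rw [map_add, LinearMap.add_apply, hm, hk]; push_cast; ring⟩
  smul_mem' := by
    rintro c x ⟨hx1, hx2⟩
    constructor
    · rw [← Int.cast_smul_eq_zsmul ℚ]
      exact Submodule.smul_mem _ _ hx1
    · intro v hv
      obtain ⟨m, hm⟩ := hx2 v hv
      refine ⟨c * m, ?_⟩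
      rw [← Int.cast_smul_eq_zsmul ℚ, map_smul, LinearMap.smul_apply, smul_eq_mul, hm]
      push_cast; ring

/-- The orthogonal complement `{w ∈ Γ : ⟨w,v⟩ = 0 for all v ∈ L}` of `L` in `Γ`. -/
def orthoCompl (B : V →ₗ[ℚ] V →ₗ[ℚ] ℚ) (Γ L : Submodule ℤ V) : Submodule ℤ V where
  carrier := {w | w ∈ Γ ∧ ∀ v ∈ L, B w v = 0}
  zero_mem' := ⟨Submodule.zero_mem _, fun v _ => by simp⟩
  add_mem' := by
    rintro x y ⟨hx1, hx2⟩ ⟨hy1, hy2⟩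
    exact ⟨Submodule.add_mem _ hx1 hy1, fun v hv => by
      rw [map_add, LinearMap.add_apply, hx2 v hv, hy2 v hv, add_zero]⟩
  smul_mem' := by
    rintro c x ⟨hx1, hx2⟩
    refine ⟨Submodule.smul_mem _ _ hx1, fun v hv => ?_⟩
    rw [← Int.cast_smul_eq_zsmul ℚ, map_smul, LinearMap.smul_apply, hx2 v hv, smul_zero]

/-!
Write `W = Λ ⊗ ℚ`. Since the form is nondegenerate on `W`, every `v ∈ Γ` splits as `v = p + q`
with `p ∈ W` and `q ⊥ W`; integrality of the form on `Γ` puts `p` in `Λ*`, and clearing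
denominators puts `q` in `Λ⊥ ⊗ ℚ`, so that `φ q = q`. Hence `φ v = v + (φ p - p) ∈ Γ`.
Conversely, `φ` is a bijective isometry of `W`, so `p = φ p₀` with `p₀ ∈ Λ*`, and
`p₀ + q = v - (φ p₀ - p₀) ∈ Γ` is a preimage of `v`. Finally `φ` is an isometry of `Γ`, hence of
the nondegenerate space `Γ ⊗ ℚ`, so it is injective.
-/

open Submodule
open LinearMap (BilinForm)

theorem LinearMap.apply_apply_eq_of_mem_span {R M N : Type*} [CommSemiring R] [AddCommMonoid M]
    [Module R M] [AddCommMonoid N] [Module R N] {B C : M →ₗ[R] M →ₗ[R] N} {s : Set M}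
    (h : ∀ x ∈ s, ∀ y ∈ s, B x y = C x y) {x y : M} (hx : x ∈ span R s) (hy : y ∈ span R s) :
    B x y = C x y := by
  have hleft : ∀ x ∈ s, Set.EqOn (B x) (C x) (span R s) := fun x hx => eqOn_span' (h x hx)
  exact eqOn_span' (f := B.flip y) (g := C.flip y) (fun x hx => hleft x hx hy) hx

theorem LinearMap.injective_of_apply_apply_eq {R M : Type*} [CommRing R] [AddCommGroup M]
    [Module R M] {B : M →ₗ[R] M →ₗ[R] R} (hB : ∀ x : M, (∀ y : M, B x y = 0) → x = 0)
    {φ : M →ₗ[R] M} (hφ : ∀ x y, B (φ x) (φ y) = B x y) : Function.Injective φ := by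
  refine (injective_iff_map_eq_zero φ).mpr fun x hx => hB x fun y => ?_
  rw [← hφ, hx, map_zero, LinearMap.zero_apply]

theorem LinearMap.BilinForm.apply_add_apply_add_of_mem_orthogonal {R M : Type*} [CommRing R]
    [AddCommGroup M] [Module R M] {B : BilinForm R M} (hB : ∀ x y, B x y = B y x)
    {W : Submodule R M} {p p' q q' : M} (hp : p ∈ W) (hp' : p' ∈ W) (hq : q ∈ B.orthogonal W)
    (hq' : q' ∈ B.orthogonal W) : B (p + q) (p' + q') = B p p' + B q q' := by
  simp only [map_add, LinearMap.add_apply]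
  rw [hq' p hp, hB q p', hq p' hp', add_zero, zero_add]

theorem exists_int_smul_mem_of_mem_span_rat {L : Submodule ℤ V} {x : V}
    (hx : x ∈ span ℚ (L : Set V)) : ∃ N : ℤ, N ≠ 0 ∧ (N : ℚ) • x ∈ L := by
  obtain ⟨y, hy, ⟨N, hN⟩, rfl⟩ := (IsLocalization.mem_span_iff (nonZeroDivisors ℤ)).mp hx
  refine ⟨N, nonZeroDivisors.ne_zero hN, ?_⟩
  rw [span_eq] at hy
  rwa [smul_smul, IsFractionRing.mk'_eq_div, map_one, one_div, algebraMap_int_eq, eq_intCast,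
    mul_inv_cancel₀ (by exact_mod_cast nonZeroDivisors.ne_zero hN), one_smul]

theorem mem_span_rat_of_int_smul_mem {L : Submodule ℤ V} {x : V} {N : ℤ} (hN : N ≠ 0)
    (hx : (N : ℚ) • x ∈ L) : x ∈ span ℚ (L : Set V) := by
  have hx' := smul_mem (span ℚ (L : Set V)) (N : ℚ)⁻¹ (subset_span hx)
  rwa [smul_smul, inv_mul_cancel₀ (by exact_mod_cast hN), one_smul] at hx'

theorem mapsTo_span_rat {L : Submodule ℤ V} {φ : V →ₗ[ℚ] V} (h : Set.MapsTo φ L L) :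
    Set.MapsTo φ (span ℚ (L : Set V)) (span ℚ (L : Set V)) := fun _ hx =>
  (map_span_le φ _ _).mpr (fun _ hv => subset_span (h hv)) (mem_map_of_mem hx)

section Extension

variable {B : V →ₗ[ℚ] V →ₗ[ℚ] ℚ} {Γ Λ : Submodule ℤ V} {φ : V →ₗ[ℚ] V} {p q : V}

theorem mem_dualLat_of_add_mem (hB : ∀ x y, B x y = B y x)
    (hint : ∀ v ∈ Γ, ∀ w ∈ Γ, ∃ n : ℤ, B v w = n) (hsub : Λ ≤ Γ)
    (hp : p ∈ span ℚ (Λ : Set V)) (hq : q ∈ BilinForm.orthogonal B (span ℚ (Λ : Set V)))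
    (hpq : p + q ∈ Γ) : p ∈ dualLat B Λ := by
  refine ⟨hp, fun w hw => ?_⟩
  obtain ⟨n, hn⟩ := hint _ hpq w (hsub hw)
  have hqw : B q w = 0 := by rw [hB]; exact hq w (subset_span hw)
  exact ⟨n, by rwa [map_add, LinearMap.add_apply, hqw, add_zero] at hn⟩

theorem mem_span_orthoCompl_of_add_mem (hB : ∀ x y, B x y = B y x) (hsub : Λ ≤ Γ)
    (hp : p ∈ span ℚ (Λ : Set V)) (hq : q ∈ BilinForm.orthogonal B (span ℚ (Λ : Set V)))
    (hpq : p + q ∈ Γ) : q ∈ span ℚ (orthoCompl B Γ Λ : Set V) := by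
  obtain ⟨N, hN, hNp⟩ := exists_int_smul_mem_of_mem_span_rat hp
  refine mem_span_rat_of_int_smul_mem hN ⟨?_, fun w hw => ?_⟩
  · have hNq : (N : ℚ) • q = N • (p + q) - (N : ℚ) • p := by
      rw [Int.cast_smul_eq_zsmul, smul_add, Int.cast_smul_eq_zsmul]; abel
    rw [hNq]
    exact sub_mem (smul_mem _ _ hpq) (hsub hNp)
  · rw [map_smul, LinearMap.smul_apply, hB, hq w (subset_span hw), smul_zero]

theorem isCompl_span_orthogonal [FiniteDimensional ℚ V] (hB : ∀ x y, B x y = B y x)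
    (hΛ : ∀ x ∈ span ℚ (Λ : Set V), (∀ v ∈ Λ, B x v = 0) → x = 0) :
    IsCompl (span ℚ (Λ : Set V)) (BilinForm.orthogonal B (span ℚ (Λ : Set V))) := by
  have hrefl : B.IsRefl := fun x y h => by rwa [hB]
  refine BilinForm.isCompl_orthogonal_of_restrict_nondegenerate hrefl
    (BilinForm.nondegenerate_restrict_of_disjoint_orthogonal B hrefl ?_)
  refine disjoint_def.mpr fun x hx hx' => hΛ x hx fun v hv => ?_
  rw [hB]
  exact hx' v (subset_span hv)

theorem surjOn_span_of_isometry [FiniteDimensional ℚ (span ℚ (Λ : Set V))]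
    (hΛ : ∀ x ∈ span ℚ (Λ : Set V), (∀ v ∈ Λ, B x v = 0) → x = 0)
    (hmaps : Set.MapsTo φ (span ℚ (Λ : Set V)) (span ℚ (Λ : Set V)))
    (hform : ∀ x ∈ span ℚ (Λ : Set V), ∀ y ∈ span ℚ (Λ : Set V), B (φ x) (φ y) = B x y) :
    Set.SurjOn φ (span ℚ (Λ : Set V)) (span ℚ (Λ : Set V)) := by
  let f := φ.restrict hmaps
  have hf : Function.Injective f := by
    refine (injective_iff_map_eq_zero f).mpr fun ⟨x, hx⟩ hfx => Subtype.ext ?_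
    have hφx : φ x = 0 := congrArg Subtype.val hfx
    refine hΛ x hx fun v hv => ?_
    rw [← hform x hx v (subset_span hv), hφx, map_zero, LinearMap.zero_apply]
  intro y hy
  obtain ⟨⟨x, hx⟩, hxy⟩ := LinearMap.surjective_of_injective hf ⟨y, hy⟩
  exact ⟨x, hx, congrArg Subtype.val hxy⟩

theorem mem_dualLat_of_apply_mem_dualLat (hmaps : Set.MapsTo φ Λ Λ)
    (hform : ∀ x ∈ span ℚ (Λ : Set V), ∀ y ∈ span ℚ (Λ : Set V), B (φ x) (φ y) = B x y)
    (hp : p ∈ span ℚ (Λ : Set V)) (hφp : φ p ∈ dualLat B Λ) : p ∈ dualLat B Λ := by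
  refine ⟨hp, fun w hw => ?_⟩
  rw [← hform p hp w (subset_span hw)]
  exact hφp.2 (φ w) (hmaps hw)

theorem exists_mem_dualLat_add_fixed [FiniteDimensional ℚ V] (hB : ∀ x y, B x y = B y x)
    (hint : ∀ v ∈ Γ, ∀ w ∈ Γ, ∃ n : ℤ, B v w = n) (hsub : Λ ≤ Γ)
    (hΛ : ∀ x ∈ span ℚ (Λ : Set V), (∀ v ∈ Λ, B x v = 0) → x = 0)
    (hfix : ∀ w ∈ span ℚ (orthoCompl B Γ Λ : Set V), φ w = w) {v : V} (hv : v ∈ Γ) :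
    ∃ p ∈ dualLat B Λ, ∃ q ∈ BilinForm.orthogonal B (span ℚ (Λ : Set V)),
      φ q = q ∧ v = p + q := by
  obtain ⟨p, hp, q, hq, rfl⟩ :=
    mem_sup.mp ((isCompl_span_orthogonal hB hΛ).sup_eq_top ▸ mem_top : v ∈ _ ⊔ _)
  exact ⟨p, mem_dualLat_of_add_mem hB hint hsub hp hq hv, q, hq,
    hfix q (mem_span_orthoCompl_of_add_mem hB hsub hp hq hv), rfl⟩

theorem apply_add_mem (hsub : Λ ≤ Γ) (hdisc : ∀ x ∈ dualLat B Λ, φ x - x ∈ Λ)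
    (hp : p ∈ dualLat B Λ) (hφq : φ q = q) (hpq : p + q ∈ Γ) : φ (p + q) ∈ Γ := by
  rw [map_add, hφq, show φ p + q = (p + q) + (φ p - p) by abel]
  exact add_mem hpq (hsub (hdisc p hp))

theorem exists_mem_apply_eq_add [FiniteDimensional ℚ (span ℚ (Λ : Set V))] (hsub : Λ ≤ Γ)
    (hΛ : ∀ x ∈ span ℚ (Λ : Set V), (∀ v ∈ Λ, B x v = 0) → x = 0) (hmaps : Set.MapsTo φ Λ Λ)
    (hform : ∀ x ∈ span ℚ (Λ : Set V), ∀ y ∈ span ℚ (Λ : Set V), B (φ x) (φ y) = B x y)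
    (hdisc : ∀ x ∈ dualLat B Λ, φ x - x ∈ Λ)
    (hp : p ∈ dualLat B Λ) (hφq : φ q = q) (hpq : p + q ∈ Γ) : ∃ v ∈ Γ, φ v = p + q := by
  obtain ⟨p₀, hp₀, rfl⟩ := surjOn_span_of_isometry hΛ (mapsTo_span_rat hmaps) hform hp.1
  have hp₀Λ : φ p₀ - p₀ ∈ Λ := hdisc p₀ (mem_dualLat_of_apply_mem_dualLat hmaps hform hp₀ hp)
  refine ⟨p₀ + q, ?_, by rw [map_add, hφq]⟩
  rw [show p₀ + q = (φ p₀ + q) - (φ p₀ - p₀) by abel]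
  exact sub_mem hpq (hsub hp₀Λ)

theorem apply_add_apply_add_of_fixed (hB : ∀ x y, B x y = B y x)
    (hmaps : Set.MapsTo φ (span ℚ (Λ : Set V)) (span ℚ (Λ : Set V)))
    (hform : ∀ x ∈ span ℚ (Λ : Set V), ∀ y ∈ span ℚ (Λ : Set V), B (φ x) (φ y) = B x y)
    {p' q' : V} (hp : p ∈ span ℚ (Λ : Set V)) (hp' : p' ∈ span ℚ (Λ : Set V))
    (hq : q ∈ BilinForm.orthogonal B (span ℚ (Λ : Set V)))
    (hq' : q' ∈ BilinForm.orthogonal B (span ℚ (Λ : Set V))) (hφq : φ q = q) (hφq' : φ q' = q') :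
    B (φ (p + q)) (φ (p' + q')) = B (p + q) (p' + q') := by
  rw [map_add φ p q, map_add φ p' q', hφq, hφq',
    BilinForm.apply_add_apply_add_of_mem_orthogonal hB (hmaps hp) (hmaps hp') hq hq',
    BilinForm.apply_add_apply_add_of_mem_orthogonal hB hp hp' hq hq', hform p hp p' hp']

end Extension

theorem statement2_general
    (B : V →ₗ[ℚ] V →ₗ[ℚ] ℚ)
    (hsymm : ∀ x y, B x y = B y x)
    (hnondeg : ∀ x : V, (∀ y : V, B x y = 0) → x = 0)
    (Γ : Submodule ℤ V)
    (hfg : Γ.FG)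
    (hfull : Submodule.span ℚ (Γ : Set V) = ⊤)
    (hint : ∀ v ∈ Γ, ∀ w ∈ Γ, ∃ n : ℤ, B v w = (n : ℚ))
    (Λ : Submodule ℤ V)
    (hsub : Λ ≤ Γ)
    (hΛnondeg : ∀ x ∈ Submodule.span ℚ (Λ : Set V), (∀ v ∈ Λ, B x v = 0) → x = 0)
    -- φ is the ℚ-linear extension of g ∈ O(Λ) by the identity on Λ⊥⊗ℚ:
    (φ : V →ₗ[ℚ] V)
    (hgΛ : Set.BijOn φ (Λ : Set V) (Λ : Set V))
    (hgform : ∀ v ∈ Λ, ∀ w ∈ Λ, B (φ v) (φ w) = B v w)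
    (hgfix : ∀ w ∈ Submodule.span ℚ ((orthoCompl B Γ Λ : Submodule ℤ V) : Set V), φ w = w)
    -- g induces the identity map on the discriminant group Λ*/Λ:
    (hgdisc : ∀ x ∈ dualLat B Λ, φ x - x ∈ Λ) :
    -- φ maps Γ bijectively onto Γ and preserves the form there: ĝ ∈ O(Γ).
    Set.BijOn φ (Γ : Set V) (Γ : Set V) ∧
    (∀ v ∈ Γ, ∀ w ∈ Γ, B (φ v) (φ w) = B v w) := by
  obtain ⟨s, hs⟩ := hfg
  have : FiniteDimensional ℚ V := ⟨⟨s, by rw [← hfull, ← hs, span_span_of_tower]⟩⟩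
  have hWform : ∀ x ∈ span ℚ (Λ : Set V), ∀ y ∈ span ℚ (Λ : Set V), B (φ x) (φ y) = B x y :=
    fun x hx y hy => LinearMap.apply_apply_eq_of_mem_span (B := B.compl₁₂ φ φ) hgform hx hy
  have hdecomp := fun v (hv : v ∈ Γ) =>
    exists_mem_dualLat_add_fixed hsymm hint hsub hΛnondeg hgfix hv
  have hform : ∀ v ∈ Γ, ∀ w ∈ Γ, B (φ v) (φ w) = B v w := by
    intro v hv w hw
    obtain ⟨p, hp, q, hqW, hq, rfl⟩ := hdecomp v hv
    obtain ⟨p', hp', q', hqW', hq', rfl⟩ := hdecomp w hw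
    exact apply_add_apply_add_of_fixed hsymm (mapsTo_span_rat hgΛ.mapsTo) hWform hp.1 hp'.1
      hqW hqW' hq hq'
  have hformV : ∀ x y, B (φ x) (φ y) = B x y := fun x y =>
    LinearMap.apply_apply_eq_of_mem_span (B := B.compl₁₂ φ φ) hform (hfull ▸ mem_top)
      (hfull ▸ mem_top)
  refine ⟨⟨fun v hv => ?_, (LinearMap.injective_of_apply_apply_eq hnondeg hformV).injOn,
    fun u hu => ?_⟩, hform⟩
  · obtain ⟨p, hp, q, -, hq, rfl⟩ := hdecomp v hv
    exact apply_add_mem hsub hgdisc hp hq hv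
  · obtain ⟨p, hp, q, -, hq, rfl⟩ := hdecomp u hu
    exact exists_mem_apply_eq_add hsub hΛnondeg hgΛ.mapsTo hWform hgdisc hp hq hu

theorem statement2
    (B : V →ₗ[ℚ] V →ₗ[ℚ] ℚ)
    (hsymm : ∀ x y, B x y = B y x)
    (hnondeg : ∀ x : V, (∀ y : V, B x y = 0) → x = 0)
    (Γ : Submodule ℤ V)
    (hfg : Γ.FG)
    (hfull : Submodule.span ℚ (Γ : Set V) = ⊤)
    (hint : ∀ v ∈ Γ, ∀ w ∈ Γ, ∃ n : ℤ, B v w = (n : ℚ))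
    (heven : ∀ v ∈ Γ, ∃ n : ℤ, B v v = 2 * (n : ℚ))
    (hunimod : dualLat B Γ = Γ)
    (Λ : Submodule ℤ V)
    (hsub : Λ ≤ Γ)
    (hprim : ∀ (c : ℤ) (x : V), x ∈ Γ → c ≠ 0 → c • x ∈ Λ → x ∈ Λ)
    (hΛnondeg : ∀ x ∈ Submodule.span ℚ (Λ : Set V), (∀ v ∈ Λ, B x v = 0) → x = 0)
    -- φ is the ℚ-linear extension of g ∈ O(Λ) by the identity on Λ⊥⊗ℚ:
    (φ : V →ₗ[ℚ] V)
    (hgΛ : Set.BijOn φ (Λ : Set V) (Λ : Set V))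
    (hgform : ∀ v ∈ Λ, ∀ w ∈ Λ, B (φ v) (φ w) = B v w)
    (hgfix : ∀ w ∈ Submodule.span ℚ ((orthoCompl B Γ Λ : Submodule ℤ V) : Set V), φ w = w)
    -- g induces the identity map on the discriminant group Λ*/Λ:
    (hgdisc : ∀ x ∈ dualLat B Λ, φ x - x ∈ Λ) :
    -- φ maps Γ bijectively onto Γ and preserves the form there: ĝ ∈ O(Γ).
    Set.BijOn φ (Γ : Set V) (Γ : Set V) ∧
    (∀ v ∈ Γ, ∀ w ∈ Γ, B (φ v) (φ w) = B v w) :=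
  statement2_general B hsymm hnondeg Γ hfg hfull hint Λ hsub hΛnondeg φ hgΛ hgform hgfix hgdisc

end
end

section
/- Let Λ be a nondegenerate integral lattice of rank r with basis λ₁,…,λ_r, Gram matrix Q, and let g ∈ O(Λ) induce the identity map on the discriminant group Λ*/Λ, with M the matrix of g in this basis. Then det(Q) divides det(I_r − M) in ℤ. -/
/-!
The rows of `Q⁻¹` are vectors of `Λ*`, so the hypothesis on `g` says exactly that
`Q⁻¹ (M - 1)` is an integer matrix `N`. Hence `M - 1 = Q N`, and taking determinants
gives `det Q ∣ det (1 - M)`.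
-/

open Matrix in
/-- A rational vector has integer entries. -/
def IsIntVec {r : ℕ} (x : Fin r → ℚ) : Prop := ∀ i, ∃ c : ℤ, x i = (c : ℚ)

section

open Matrix

variable {r : ℕ}

lemma isIntVec_map_row (N : Matrix (Fin r) (Fin r) ℤ) (i : Fin r) :
    IsIntVec (N.map ((↑) : ℤ → ℚ) i) :=
  fun k => ⟨N i k, rfl⟩

theorem exists_eq_mul_of_isIntVec_vecMul {A B : Matrix (Fin r) (Fin r) ℤ} (hA : A.det ≠ 0)
    (h : ∀ x : Fin r → ℚ, IsIntVec (vecMul x (A.map ((↑) : ℤ → ℚ))) →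
      IsIntVec (vecMul x (B.map ((↑) : ℤ → ℚ)))) :
    ∃ N : Matrix (Fin r) (Fin r) ℤ, B = A * N := by
  set Aq := A.map ((↑) : ℤ → ℚ)
  set Bq := B.map ((↑) : ℤ → ℚ)
  have hAq : IsUnit Aq.det := by
    rw [isUnit_iff_ne_zero, ← Int.cast_det]
    exact_mod_cast hA
  have hrow (i : Fin r) : IsIntVec ((Aq⁻¹ * Bq) i) := by
    refine h (Aq⁻¹ i) ?_
    have hAq_row : vecMul (Aq⁻¹ i) Aq = (1 : Matrix (Fin r) (Fin r) ℤ).map ((↑) : ℤ → ℚ) i := by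
      rw [Matrix.map_one _ Int.cast_zero Int.cast_one, ← nonsing_inv_mul Aq hAq]
      rfl
    exact hAq_row ▸ isIntVec_map_row 1 i
  choose N hN using hrow
  refine ⟨Matrix.of N, map_injective (f := ((↑) : ℤ → ℚ)) Int.cast_injective ?_⟩
  have hNq : (Matrix.of N).map ((↑) : ℤ → ℚ) = Aq⁻¹ * Bq := by
    ext i j
    exact (hN i j).symm
  have hmul : (A * Matrix.of N).map ((↑) : ℤ → ℚ) = Aq * (Matrix.of N).map ((↑) : ℤ → ℚ) :=
    Matrix.map_mul (f := Int.castRingHom ℚ)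
  show Bq = (A * Matrix.of N).map ((↑) : ℤ → ℚ)
  rw [hmul, hNq, mul_nonsing_inv_cancel_left Aq Bq hAq]

end

open Matrix in
theorem statement5_general (r : ℕ) (Q M : Matrix (Fin r) (Fin r) ℤ)
    (hnondeg : Q.det ≠ 0)
    (hdisc : ∀ x : Fin r → ℚ,
      IsIntVec (Matrix.vecMul x (Q.map ((↑) : ℤ → ℚ))) →
      IsIntVec (Matrix.vecMul x (M.map ((↑) : ℤ → ℚ)) - x)) :
    Q.det ∣ (1 - M).det := by
  obtain ⟨N, hN⟩ := exists_eq_mul_of_isIntVec_vecMul (B := M - 1) hnondeg fun x hx => by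
    rw [Matrix.map_sub _ Int.cast_sub, Matrix.map_one _ Int.cast_zero Int.cast_one, vecMul_sub,
      vecMul_one]
    exact hdisc x hx
  refine ⟨(-N).det, ?_⟩
  rw [← det_mul, mul_neg, ← hN, neg_sub]

open Matrix in
theorem statement5 (r : ℕ) (Q M : Matrix (Fin r) (Fin r) ℤ)
    (hsymm : Qᵀ = Q)
    (hnondeg : Q.det ≠ 0)
    (hO : M * Q * Mᵀ = Q)
    (hMunit : IsUnit M.det)
    (hdisc : ∀ x : Fin r → ℚ,
      IsIntVec (Matrix.vecMul x (Q.map ((↑) : ℤ → ℚ))) →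
      IsIntVec (Matrix.vecMul x (M.map ((↑) : ℤ → ℚ)) - x)) :
    Q.det ∣ (1 - M).det :=
  statement5_general r Q M hnondeg hdisc
end

section
/- Every even positive-definite lattice of rank 2 whose Gram matrix has determinant 3 is isometric to the A₂ root lattice, i.e. to ℤ² with Gram matrix [[2,−1],[−1,2]]. -/
/-!
Gauss reduction of binary quadratic forms. The Gram matrix of the lattice in the basis `b` is
`!![2a, β; β, 2c]` with `a > 0` and `4ac - β² = 3`. A shear `x ↦ x + k y` brings `β` into
`[-a, a)` without changing `a` or the determinant; if then `c < a`, swapping the basis vectors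
lowers `a`, so after finitely many steps `-a ≤ β < a ≤ c`. For such a reduced form
`3a² ≤ 4ac - β² = 3`, which forces `a = c = 1`, `β = -1`, i.e. the Gram matrix of `A₂`.
-/

open Matrix

namespace Matrix

variable {n R : Type*} [Fintype n] [CommRing R]

theorem dotProduct_conj_mulVec (V A : Matrix n n R) (x y : n → R) :
    x ⬝ᵥ ((Vᵀ * A * V) *ᵥ y) = (V *ᵥ x) ⬝ᵥ (A *ᵥ (V *ᵥ y)) := by
  rw [← mulVec_mulVec, ← mulVec_mulVec, dotProduct_mulVec, vecMul_transpose]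

variable [DecidableEq n]

/-- `G` is the Gram matrix, in some basis of `n → R`, of the bilinear form with Gram matrix `A`. -/
def GramCongr (A G : Matrix n n R) : Prop :=
  ∃ V : GL n R, G = (V : Matrix n n R)ᵀ * A * V

theorem GramCongr.refl (A : Matrix n n R) : GramCongr A A :=
  ⟨1, by simp⟩

theorem GramCongr.trans {A G H : Matrix n n R} (hAG : GramCongr A G) (hGH : GramCongr G H) :
    GramCongr A H := by
  obtain ⟨V, rfl⟩ := hAG
  obtain ⟨W, rfl⟩ := hGH
  exact ⟨V * W, by simp only [Units.val_mul, transpose_mul, Matrix.mul_assoc]⟩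

theorem gramCongr_of_isUnit_det {A G : Matrix n n R} (T : Matrix n n R) (hT : IsUnit T.det)
    (hG : Tᵀ * A * T = G) : GramCongr A G :=
  ⟨GeneralLinearGroup.mk'' T hT, hG.symm⟩

end Matrix

theorem gramCongr_shear (a β c k : ℤ) :
    GramCongr !![2*a, β - 2*a*k; β - 2*a*k, 2*(c - β*k + a*k^2)] !![2*a, β; β, 2*c] := by
  refine gramCongr_of_isUnit_det !![1, k; 0, 1] (by simp [det_fin_two_of]) ?_
  ext i j
  fin_cases i <;> fin_cases j <;> simp [mul_apply, Fin.sum_univ_two] <;> ring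

theorem gramCongr_swap (a β c : ℤ) : GramCongr !![2*c, β; β, 2*a] !![2*a, β; β, 2*c] := by
  refine gramCongr_of_isUnit_det !![0, 1; 1, 0] (by simp [det_fin_two_of]) ?_
  ext i j
  fin_cases i <;> fin_cases j <;> simp [mul_apply, Fin.sum_univ_two]

theorem exists_gramCongr_reduced {a : ℤ} (ha : 0 < a) (β c : ℤ) :
    ∃ β' c', -a ≤ β' ∧ β' < a ∧ 4*a*c' - β'^2 = 4*a*c - β^2 ∧
      GramCongr !![2*a, β'; β', 2*c'] !![2*a, β; β, 2*c] := by
  set k := (β + a) / (2*a)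
  have hmod : β - 2*a*k = (β + a) % (2*a) - a := by rw [Int.emod_def]; ring
  refine ⟨β - 2*a*k, c - β*k + a*k^2, ?_, ?_, by ring, gramCongr_shear a β c k⟩
  · have := Int.emod_nonneg (β + a) (by omega : 2*a ≠ 0)
    omega
  · have := Int.emod_lt_of_pos (β + a) (by omega : 0 < 2*a)
    omega

theorem eq_of_reduced_of_disc_eq_three {a β c : ℤ} (hβ : -a ≤ β) (hβ' : β < a) (hac : a ≤ c)
    (hdisc : 4*a*c - β^2 = 3) : a = 1 ∧ β = -1 ∧ c = 1 := by
  have ha : a = 1 := by nlinarith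
  subst ha
  obtain rfl | rfl : β = -1 ∨ β = 0 := by omega
  · exact ⟨rfl, rfl, by linarith⟩
  · omega

theorem gramCongr_A₂_of_disc_eq_three {a : ℤ} (ha : 0 < a) {β c : ℤ} (hdisc : 4*a*c - β^2 = 3) :
    GramCongr !![2, -1; -1, 2] !![2*a, β; β, 2*c] := by
  obtain ⟨β', c', hβ, hβ', hdisc', hred⟩ := exists_gramCongr_reduced ha β c
  rw [← hdisc'] at hdisc
  refine GramCongr.trans ?_ hred
  rcases le_or_gt a c' with hac | hca
  · obtain ⟨rfl, rfl, rfl⟩ := eq_of_reduced_of_disc_eq_three hβ hβ' hac hdisc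
    exact GramCongr.refl _
  · have hc' : 0 < c' := by nlinarith
    exact (gramCongr_A₂_of_disc_eq_three hc' (by linarith)).trans (gramCongr_swap a β' c')
termination_by a.toNat
decreasing_by omega

open Matrix in
theorem statement6 {M : Type} [AddCommGroup M] [Module ℤ M]
    (B : M →ₗ[ℤ] M →ₗ[ℤ] ℤ)
    (hsymm : ∀ v w, B v w = B w v)
    (heven : ∀ v, Even (B v v))
    (hpos : ∀ v, v ≠ 0 → 0 < B v v)
    (b : Module.Basis (Fin 2) ℤ M)
    (hdet : (Matrix.of fun s t => B (b s) (b t)).det = 3) :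
    ∃ e : M ≃ₗ[ℤ] (Fin 2 → ℤ),
      ∀ v w, B v w = dotProduct (e v) (Matrix.mulVec !![2,-1;-1,2] (e w)) := by
  obtain ⟨a, ha⟩ := heven (b 0)
  obtain ⟨c, hc⟩ := heven (b 1)
  have hmatrix : LinearMap.BilinForm.toMatrix b B = of fun s t => B (b s) (b t) := by
    ext; simp [LinearMap.BilinForm.toMatrix_apply]
  have hgram : of (fun s t => B (b s) (b t)) = !![2*a, B (b 0) (b 1); B (b 0) (b 1), 2*c] := by
    ext i j
    fin_cases i <;> fin_cases j <;> simp [ha, hc, hsymm (b 1)] <;> ring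
  have hapos : 0 < a := by linarith [hpos (b 0) (b.ne_zero 0)]
  have hdisc : 4*a*c - B (b 0) (b 1)^2 = 3 := by
    rw [hgram, det_fin_two_of] at hdet
    linarith
  obtain ⟨V, hV⟩ := gramCongr_A₂_of_disc_eq_three hapos hdisc
  refine ⟨b.equivFun.trans (LinearMap.GeneralLinearGroup.generalLinearEquiv _ _
    (GeneralLinearGroup.toLin V)), fun v w => ?_⟩
  rw [LinearMap.BilinForm.apply_eq_dotProduct_toMatrix_mulVec b, hmatrix, hgram, hV,
    dotProduct_conj_mulVec]
  rfl
end

section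
/- Every even positive-definite lattice of rank 2 whose Gram matrix has determinant 4 is isometric to the lattice A₁ ⊕ A₁, i.e. to ℤ² with Gram matrix [[2,0],[0,2]]. -/
/-!
Let `u` be a nonzero vector of minimal norm `a = B u u`. Minimality forces `u` to be primitive,
so it extends to a basis `(u, w)`, and after replacing `w` by `w - k • u` we get
`2 |B u w| ≤ a ≤ B w w` (Lagrange–Gauss reduction). The Gram determinant changes by the square of
a unit under a change of basis, so `a * B w w - (B u w)² = 4`, whence `3 a² ≤ 16`. As `a` is even
and positive, `a = 2`; then `2 B w w = 4 + (B u w)²` with `|B u w| ≤ 1` gives `B u w = 0` and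
`B w w = 2`.
-/

open Matrix Module

section Gram

variable {R M ι : Type*} [CommRing R] [AddCommGroup M] [Module R M] [Fintype ι] [DecidableEq ι]

theorem LinearMap.apply_eq_dotProduct_toMatrix₂_mulVec (B : M →ₗ[R] M →ₗ[R] R)
    (b : Basis ι R M) (v w : M) :
    B v w = b.equivFun v ⬝ᵥ (LinearMap.toMatrix₂ b b B *ᵥ b.equivFun w) := by
  conv_lhs => rw [← Matrix.toLinearMap₂_toMatrix₂ b b B]
  simp only [Matrix.toLinearMap₂_apply, dotProduct, mulVec, Basis.equivFun_apply, smul_eq_mul,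
    Finset.mul_sum]
  exact Finset.sum_congr rfl fun _ _ => Finset.sum_congr rfl fun _ _ => by ring

theorem LinearMap.det_toMatrix₂_basis (B : M →ₗ[R] M →ₗ[R] R) (b b' : Basis ι R M) :
    (LinearMap.toMatrix₂ b' b' B).det = b.det b' ^ 2 * (LinearMap.toMatrix₂ b b B).det := by
  rw [← LinearMap.toMatrix₂_mul_basis_toMatrix b b b' b' B, det_mul, det_mul, det_transpose,
    ← b.det_apply]
  ring

theorem Module.Basis.exists_coe_eq_of_isUnit_det (b : Basis ι R M) {v : ι → M}
    (h : IsUnit (b.det v)) : ∃ b' : Basis ι R M, ⇑b' = v := by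
  obtain ⟨hli, hspan⟩ := (b.is_basis_iff_det).mpr h
  exact ⟨Basis.mk hli hspan.ge, Basis.coe_mk _ _⟩

end Gram

theorem Module.Basis.exists_basis_zero_eq_of_isCoprime {M : Type*} [AddCommGroup M] [Module ℤ M]
    (b : Basis (Fin 2) ℤ M) {u : M} (h : IsCoprime (b.repr u 0) (b.repr u 1)) :
    ∃ b' : Basis (Fin 2) ℤ M, b' 0 = u := by
  obtain ⟨p, q, hpq⟩ := h
  have hdet : b.det ![u, -q • b 0 + p • b 1] = 1 := by
    rw [b.det_apply, det_fin_two]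
    simp [Basis.toMatrix_apply]
    linear_combination hpq
  obtain ⟨b', hb'⟩ := b.exists_coe_eq_of_isUnit_det (hdet ▸ isUnit_one)
  exact ⟨b', by simp [hb']⟩

theorem Int.exists_two_mul_abs_sub_mul_le (n : ℤ) {a : ℤ} (ha : 0 < a) :
    ∃ k : ℤ, 2 * |n - k * a| ≤ a := by
  have hr : n - n / a * a = n % a := by rw [Int.emod_def]; ring
  have h0 := Int.emod_nonneg n ha.ne'
  have h1 := Int.emod_lt_of_pos n ha
  by_cases h : 2 * (n % a) ≤ a
  · exact ⟨n / a, by rwa [hr, abs_of_nonneg h0]⟩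
  · refine ⟨n / a + 1, ?_⟩
    rw [show n - (n / a + 1) * a = n % a - a by linarith, abs_of_neg (by linarith)]
    linarith

section MinimalVector

variable {M : Type*} [AddCommGroup M] [Module ℤ M] (B : M →ₗ[ℤ] M →ₗ[ℤ] ℤ)

def IsMinimalVector (u : M) : Prop :=
  u ≠ 0 ∧ ∀ v, v ≠ 0 → B u u ≤ B v v

variable {B}

theorem exists_isMinimalVector [Nontrivial M] (hpos : ∀ v, v ≠ 0 → 0 < B v v) :
    ∃ u, IsMinimalVector B u := by
  obtain ⟨v, hv⟩ := exists_ne (0 : M)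
  obtain ⟨n, ⟨u, hu, rfl⟩, hmin⟩ := Int.exists_least_of_bdd (P := fun n => ∃ u ≠ 0, B u u = n)
    ⟨0, fun _ ⟨u, hu, h⟩ => h ▸ (hpos u hu).le⟩ ⟨_, v, hv, rfl⟩
  exact ⟨u, hu, fun w hw => hmin _ ⟨w, hw, rfl⟩⟩

theorem IsMinimalVector.isUnit_of_eq_smul (hpos : ∀ v, v ≠ 0 → 0 < B v v) {u v : M}
    (hu : IsMinimalVector B u) {n : ℤ} (h : u = n • v) : IsUnit n := by
  have hv : v ≠ 0 := by rintro rfl; exact hu.1 (by rw [h, zsmul_zero])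
  have hn : n ≠ 0 := by rintro rfl; exact hu.1 (by rw [h, zero_smul])
  have hnorm : B u u = n * n * B v v := by
    simp only [h, map_zsmul, LinearMap.smul_apply, smul_eq_mul]; ring
  have hsq : n * n ≤ 1 := by nlinarith [hu.2 v hv, hpos u hu.1, mul_self_nonneg n]
  have := abs_le_one_iff_mul_self_le_one.mpr hsq
  have := abs_pos.mpr hn
  exact Int.isUnit_iff_abs_eq.mpr (by omega)

theorem IsMinimalVector.isCoprime_repr (hpos : ∀ v, v ≠ 0 → 0 < B v v) {u : M}
    (hu : IsMinimalVector B u) (b : Basis (Fin 2) ℤ M) :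
    IsCoprime (b.repr u 0) (b.repr u 1) := by
  set g : ℤ := (Int.gcd (b.repr u 0) (b.repr u 1) : ℤ)
  have hdvd : ∀ i, g ∣ b.repr u i := by
    intro i
    fin_cases i
    exacts [Int.gcd_dvd_left _ _, Int.gcd_dvd_right _ _]
  have hsmul : u = g • b.equivFun.symm (fun i => b.repr u i / g) := by
    apply b.equivFun.injective
    ext i
    simp only [map_zsmul, LinearEquiv.apply_symm_apply, Pi.smul_apply, smul_eq_mul]
    exact (Int.mul_ediv_cancel' (hdvd i)).symm
  rw [Int.isCoprime_iff_gcd_eq_one]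
  simpa [g] using Int.isUnit_iff_abs_eq.mp (hu.isUnit_of_eq_smul hpos hsmul)

theorem exists_basis_isMinimalVector_reduced (hpos : ∀ v, v ≠ 0 → 0 < B v v)
    (b : Basis (Fin 2) ℤ M) :
    ∃ b' : Basis (Fin 2) ℤ M,
      IsMinimalVector B (b' 0) ∧ 2 * |B (b' 0) (b' 1)| ≤ B (b' 0) (b' 0) := by
  have : Nontrivial M := ⟨⟨b 0, 0, b.ne_zero 0⟩⟩
  obtain ⟨u, hu⟩ := exists_isMinimalVector hpos
  obtain ⟨b₁, rfl⟩ := b.exists_basis_zero_eq_of_isCoprime (hu.isCoprime_repr hpos b)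
  obtain ⟨k, hk⟩ := Int.exists_two_mul_abs_sub_mul_le (B (b₁ 0) (b₁ 1)) (hpos _ hu.1)
  have hdet : b₁.det ![b₁ 0, b₁ 1 - k • b₁ 0] = 1 := by
    rw [b₁.det_apply, det_fin_two]
    simp [Basis.toMatrix_apply]
  obtain ⟨b', hb'⟩ := b₁.exists_coe_eq_of_isUnit_det (hdet ▸ isUnit_one)
  refine ⟨b', by simpa [hb'] using hu, ?_⟩
  simpa [hb', map_zsmul] using hk

end MinimalVector

theorem Int.eq_two_of_even_of_reduced_of_det_eq_four {a s c : ℤ} (ha : Even a) (ha0 : 0 < a)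
    (hac : a ≤ c) (hs : 2 * |s| ≤ a) (hdet : a * c - s * s = 4) : a = 2 ∧ s = 0 ∧ c = 2 := by
  have hs2 : 4 * (s * s) ≤ a * a := by nlinarith [abs_mul_abs_self s, abs_nonneg s]
  have hss : s * s ≤ 1 := by nlinarith
  have ha2 : 2 ≤ a := by
    obtain ⟨r, rfl⟩ := ha
    omega
  obtain rfl : a = 2 := by nlinarith
  obtain ⟨hs_lower, hs_upper⟩ := abs_le.mp (by linarith : |s| ≤ 1)
  interval_cases s <;> omega

open Matrix in
theorem statement7 {M : Type} [AddCommGroup M] [Module ℤ M]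
    (B : M →ₗ[ℤ] M →ₗ[ℤ] ℤ)
    (hsymm : ∀ v w, B v w = B w v)
    (heven : ∀ v, Even (B v v))
    (hpos : ∀ v, v ≠ 0 → 0 < B v v)
    (b : Module.Basis (Fin 2) ℤ M)
    (hdet : (Matrix.of fun s t => B (b s) (b t)).det = 4) :
    ∃ e : M ≃ₗ[ℤ] (Fin 2 → ℤ),
      ∀ v w, B v w = dotProduct (e v) (Matrix.mulVec !![2,0;0,2] (e w)) := by
  obtain ⟨b', ⟨hne, hmin⟩, hred⟩ := exists_basis_isMinimalVector_reduced hpos b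
  have hdet' : (LinearMap.toMatrix₂ b' b' B).det = 4 := by
    rw [B.det_toMatrix₂_basis b b', Int.isUnit_sq (b.isUnit_det b'), one_mul, ← hdet]
    congr 1
    ext s t
    exact LinearMap.toMatrix₂_apply _ _ _ s t
  rw [det_fin_two] at hdet'
  simp only [LinearMap.toMatrix₂_apply, hsymm (b' 1) (b' 0)] at hdet'
  obtain ⟨h00, h01, h11⟩ := Int.eq_two_of_even_of_reduced_of_det_eq_four (heven _)
    (hpos _ hne) (hmin _ (b'.ne_zero 1)) hred hdet'
  have hgram : LinearMap.toMatrix₂ b' b' B = !![2, 0; 0, 2] := by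
    ext i j; fin_cases i <;> fin_cases j <;> simp [h00, h01, h11, hsymm (b' 1) (b' 0)]
  exact ⟨b'.equivFun, fun v w => by rw [B.apply_eq_dotProduct_toMatrix₂_mulVec b', hgram]⟩
end
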